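/- arXiv:2305.00765 — 2 statements merged into one kernel-verified Lean document; each statement's English description precedes it below -/
import Mathlib

section
/- For every integer n ≥ 1, the polynomial W_n(x) = ∏_{1 ≤ k < n/2, gcd(k,n)=1} (x^2 + 4 sin^2(πk/n)) (with W_1 = W_2 = 1) has integer coefficients. -/
/-!
Put `t = x ^ 2 + 2 = u + u⁻¹` and `ζ = exp (2πi / n)`. Then
`u * (x ^ 2 + 4 sin² (πk/n)) = (u - ζ ^ k) * (u - ζ ^ (n - k))`, so pairing the roots `ζ ^ k`,
`ζ ^ (n - k)` of `(u ^ n - 1) / (u - 1)` expresses `V_n(x)` through `u ^ n - 1`. An explicit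
combination of Chebyshev polynomials `S_m(t)` with integer coefficients satisfies the same
identity, hence `V_n ∈ ℤ[x]`. Sorting the fractions `k/n` by their reduced denominators gives
`V_n = ∏_{d ∣ n} W_d`, and by strong induction `W_n` is the quotient of `V_n` by the monic
integer polynomial `∏_{d ∣ n, d < n} W_d`.
-/

open Finset Polynomial Real

/-- `V_n(x) = ∏_{1 ≤ k < n/2} (x^2 + 4 sin²(πk/n))`, with `V_1 = V_2 = 1`. -/
noncomputable def V (n : ℕ) : Polynomial ℝ :=
  ∏ k ∈ (Finset.Ico 1 n).filter (fun k => 2 * k < n),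
    (Polynomial.X ^ 2 + Polynomial.C (4 * Real.sin (Real.pi * k / n) ^ 2))

/-- `W_n(x) = ∏_{1 ≤ k < n/2, gcd(k,n)=1} (x^2 + 4 sin²(πk/n))`, with `W_1 = W_2 = 1`. -/
noncomputable def W (n : ℕ) : Polynomial ℝ :=
  ∏ k ∈ (Finset.Ico 1 n).filter (fun k => 2 * k < n ∧ Nat.gcd k n = 1),
    (Polynomial.X ^ 2 + Polynomial.C (4 * Real.sin (Real.pi * k / n) ^ 2))

theorem Polynomial.Chebyshev.S_sub_one_eval_add_mul_sub {R : Type*} [CommRing R] {x y : R}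
    (h : x * y = 1) (n : ℕ) : (S R (n - 1)).eval (x + y) * (x - y) = x ^ n - y ^ n := by
  induction n using Nat.twoStepInduction with
  | zero => simp
  | one => simp
  | more n ih₀ ih₁ =>
    rw [show ((n + 2 : ℕ) : ℤ) - 1 = (n - 1) + 2 by push_cast; ring, S_add_two,
      show (n : ℤ) - 1 + 1 = ((n + 1 : ℕ) : ℤ) - 1 by push_cast; ring]
    simp only [eval_sub, eval_mul, eval_X]
    linear_combination (x + y) * ih₁ - ih₀ + (x ^ n - y ^ n) * h

theorem Polynomial.mem_lifts_of_monic_mul_mem_lifts {R S : Type*} [Ring R] [Ring S]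
    {f : R →+* S} {p q : S[X]} (hp : p ∈ lifts f) (hmonic : p.Monic) (hpq : p * q ∈ lifts f) :
    q ∈ lifts f := by
  obtain ⟨p', hp', -, hp'm⟩ := lifts_and_natDegree_eq_and_monic hp hmonic
  obtain ⟨r, hr⟩ := (mem_lifts _).1 hpq
  refine (mem_lifts _).2 ⟨r /ₘ p', ?_⟩
  rw [map_divByMonic f hp'm, hr, hp', mul_divByMonic_cancel_left q hmonic]

theorem IsPrimitiveRoot.prod_range_sub_pow {R : Type*} [CommRing R] [IsDomain R] {ζ : R} {n : ℕ}
    (hζ : IsPrimitiveRoot ζ n) (hn : 0 < n) (u : R) : ∏ k ∈ range n, (u - ζ ^ k) = u ^ n - 1 := by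
  simpa [eval_prod] using (congrArg (eval u) (X_pow_sub_C_eq_prod hζ hn (one_pow n))).symm

theorem Finset.prod_Ico_one_eq_prod_pairs {M : Type*} [CommMonoid M] (f : ℕ → M) (n : ℕ) :
    ∏ k ∈ Ico 1 n, f k =
      (∏ k ∈ (Ico 1 n).filter (2 * · < n), f k * f (n - k)) *
        ∏ k ∈ (Ico 1 n).filter (2 * · = n), f k := by
  have hreflect : ∏ k ∈ (Ico 1 n).filter (2 * · < n), f (n - k) =
      ∏ k ∈ (Ico 1 n).filter (n < 2 * ·), f k :=
    prod_nbij' (n - ·) (n - ·) (by intro k; simp; omega) (by intro k; simp; omega)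
      (by intro k; simp; omega) (by intro k; simp; omega) fun _ _ => rfl
  have hrest : ∏ k ∈ (Ico 1 n).filter (¬ 2 * · < n), f k =
      (∏ k ∈ (Ico 1 n).filter (n < 2 * ·), f k) * ∏ k ∈ (Ico 1 n).filter (2 * · = n), f k := by
    rw [← prod_filter_mul_prod_filter_not _ (n < 2 * ·), filter_filter, filter_filter]
    congr 1 <;> refine prod_congr ?_ fun _ _ => rfl <;> ext k <;> simp <;> omega
  rw [prod_mul_distrib, hreflect, ← prod_filter_mul_prod_filter_not (Ico 1 n) (2 * · < n), hrest,
    mul_assoc]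

theorem Nat.prod_Ico_div_eq_prod_divisors_prod_coprime {M : Type*} [CommMonoid M] (F : ℚ → M)
    {n : ℕ} (hn : n ≠ 0) :
    ∏ k ∈ Ico 1 n, F (k / n) =
      ∏ d ∈ n.divisors, ∏ j ∈ (Ico 1 d).filter (·.Coprime d), F (j / d) := by
  rw [prod_sigma']
  refine prod_bij' (fun k _ => ⟨n / k.gcd n, k / k.gcd n⟩) (fun p _ => p.2 * (n / p.1))
    ?_ ?_ ?_ ?_ ?_
  · intro k hk
    simp only [mem_Ico] at hk
    have hg : 0 < k.gcd n := Nat.gcd_pos_of_pos_right _ (by omega)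
    simp only [mem_sigma, Nat.mem_divisors, mem_filter, mem_Ico]
    exact ⟨⟨Nat.div_dvd_of_dvd (Nat.gcd_dvd_right k n), hn⟩,
      ⟨Nat.div_pos (Nat.gcd_le_left n (by omega)) hg,
        Nat.div_lt_div_of_lt_of_dvd (Nat.gcd_dvd_right k n) hk.2⟩, Nat.coprime_div_gcd_div_gcd hg⟩
  · rintro ⟨d, j⟩ hp
    simp only [mem_sigma, Nat.mem_divisors, mem_filter, mem_Ico] at hp ⊢
    obtain ⟨⟨⟨e, rfl⟩, -⟩, ⟨hj₁, hjd⟩, -⟩ := hp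
    have he : 0 < e := Nat.pos_of_ne_zero (by rintro rfl; simp at hn)
    rw [Nat.mul_div_cancel_left e (by omega)]
    constructor <;> nlinarith
  · intro k _
    dsimp only
    rw [Nat.div_div_self (Nat.gcd_dvd_right k n) hn, Nat.div_mul_cancel (Nat.gcd_dvd_left k n)]
  · rintro ⟨d, j⟩ hp
    simp only [mem_sigma, Nat.mem_divisors, mem_filter, mem_Ico] at hp
    obtain ⟨⟨⟨e, rfl⟩, -⟩, -, hjd⟩ := hp
    have hd : 0 < d := Nat.pos_of_ne_zero (by rintro rfl; simp at hn)
    have he : 0 < e := Nat.pos_of_ne_zero (by rintro rfl; simp at hn)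
    have hgcd : (j * e).gcd (d * e) = e := by rw [Nat.gcd_mul_right, hjd, one_mul]
    simp only [Nat.mul_div_cancel_left e hd, hgcd, Nat.mul_div_cancel _ he]
  · intro k _
    have hg : (k.gcd n : ℚ) ≠ 0 := by exact_mod_cast (Nat.gcd_pos_of_pos_right _ (by omega)).ne'
    dsimp only
    rw [Nat.cast_div (Nat.gcd_dvd_left k n) hg, Nat.cast_div (Nat.gcd_dvd_right k n) hg,
      div_div_div_cancel_right₀ hg]

theorem Complex.ofReal_sub_exp_mul_ofReal_sub_exp_neg (u θ : ℝ) :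
    ((u : ℂ) - exp (θ * I)) * ((u : ℂ) - exp (-θ * I)) =
      ((u ^ 2 - 2 * u * Real.cos θ + 1 : ℝ) : ℂ) := by
  have hsum := two_cos θ
  have hprod : exp (θ * I) * exp (-θ * I) = 1 := by
    rw [← exp_add]; simp
  push_cast
  linear_combination (u : ℂ) * hsum + hprod

theorem Real.mul_sq_add_four_sin_sq {x u : ℝ} (hu : u ≠ 0) (hux : u + u⁻¹ = x ^ 2 + 2) (θ : ℝ) :
    u * (x ^ 2 + 4 * sin θ ^ 2) = u ^ 2 - 2 * u * cos (2 * θ) + 1 := by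
  rw [cos_two_mul, cos_sq']
  linear_combination u * hux.symm + mul_inv_cancel₀ hu

theorem Real.exists_pos_add_inv_eq_sq_add_two (x : ℝ) : ∃ u : ℝ, 0 < u ∧ u + u⁻¹ = x ^ 2 + 2 := by
  set s := √(x ^ 2 + 4)
  have hs : s ^ 2 = x ^ 2 + 4 := sq_sqrt (by positivity)
  have hxs : 0 < x + s := by nlinarith [sqrt_nonneg (x ^ 2 + 4)]
  have hinv : ((x + s) / 2)⁻¹ = (s - x) / 2 :=
    inv_eq_of_mul_eq_one_right (by linear_combination hs / 4)
  refine ⟨((x + s) / 2) ^ 2, by positivity, ?_⟩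
  rw [← inv_pow, hinv]
  linear_combination hs / 2

theorem Complex.exp_two_pi_mul_I_div_pow (n k : ℕ) :
    exp (2 * π * I / n) ^ k = exp (↑(2 * (π * k / n)) * I) := by
  rw [← exp_nat_mul]; congr 1; push_cast; ring

theorem Complex.prod_filter_two_mul_eq_ofReal_sub_exp_pow {n : ℕ} (hn : n ≠ 0) (u : ℝ) :
    ∏ k ∈ (Ico 1 n).filter (2 * · = n), ((u : ℂ) - exp (2 * π * I / n) ^ k) =
      ((if Even n then u + 1 else 1 : ℝ) : ℂ) := by
  obtain ⟨m, rfl | rfl⟩ := Nat.even_or_odd' n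
  · have hm : (m : ℝ) ≠ 0 := by norm_cast; omega
    rw [if_pos (even_two_mul m), show (Ico 1 (2 * m)).filter (2 * · = 2 * m) = {m} by
      ext; simp; omega, prod_singleton, exp_two_pi_mul_I_div_pow,
      show 2 * (π * m / (2 * m : ℕ)) = π by push_cast; field_simp, exp_pi_mul_I]
    push_cast
    ring
  · rw [if_neg (Nat.not_even_two_mul_add_one m), show (Ico 1 (2 * m + 1)).filter
      (2 * · = 2 * m + 1) = ∅ by ext; simp; omega, prod_empty]
    simp

theorem eval_V {n : ℕ} (hn : 0 < n) {x u : ℝ} (hu : u ≠ 0) (hux : u + u⁻¹ = x ^ 2 + 2) :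
    (V n).eval x * (u ^ ((n - 1) / 2) * (u - 1) * (if Even n then u + 1 else 1)) = u ^ n - 1 := by
  set ζ := Complex.exp (2 * π * Complex.I / n)
  have hζ : IsPrimitiveRoot ζ n := Complex.isPrimitiveRoot_exp n hn.ne'
  have hζpow := Complex.exp_two_pi_mul_I_div_pow n
  have hζpow_sub {k : ℕ} (hk : k ≤ n) :
      ζ ^ (n - k) = Complex.exp (-↑(2 * (π * k / n)) * Complex.I) := by
    rw [neg_mul, Complex.exp_neg, ← hζpow]
    exact eq_inv_of_mul_eq_one_left (by rw [← pow_add, Nat.sub_add_cancel hk, hζ.pow_eq_one])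
  have hpairs : ∏ k ∈ (Ico 1 n).filter (2 * · < n), ((u : ℂ) - ζ ^ k) * ((u : ℂ) - ζ ^ (n - k)) =
      ((u ^ ((n - 1) / 2) * (V n).eval x : ℝ) : ℂ) := by
    have hcard : ((Ico 1 n).filter (2 * · < n)).card = (n - 1) / 2 := by
      rw [show (Ico 1 n).filter (2 * · < n) = Ico 1 ((n + 1) / 2) by ext; simp; omega,
        Nat.card_Ico]
      omega
    rw [V, eval_prod, ← hcard, ← prod_const, ← prod_mul_distrib, Complex.ofReal_prod]
    refine prod_congr rfl fun k hk => ?_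
    rw [hζpow, hζpow_sub (by simp at hk; omega), Complex.ofReal_sub_exp_mul_ofReal_sub_exp_neg,
      ← mul_sq_add_four_sin_sq hu hux]
    simp
  have hroots := hζ.prod_range_sub_pow hn (u : ℂ)
  rw [range_eq_Ico, prod_eq_prod_Ico_succ_bot hn, pow_zero, prod_Ico_one_eq_prod_pairs, hpairs,
    Complex.prod_filter_two_mul_eq_ofReal_sub_exp_pow hn.ne'] at hroots
  apply Complex.ofReal_injective
  push_cast at hroots ⊢
  linear_combination hroots

/-- For `n ≥ 1`, as a polynomial in `t = x ^ 2 + 2` this has the roots `2 cos (2πk/n)`,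
`1 ≤ k < n/2`. -/
noncomputable def VInt (n : ℕ) : ℤ[X] :=
  (if Even n then Chebyshev.S ℤ ((n / 2 : ℕ) - 1)
    else Chebyshev.S ℤ (n / 2 : ℕ) + Chebyshev.S ℤ ((n / 2 : ℕ) - 1)).comp (X ^ 2 + 2)

theorem eval_map_VInt {n : ℕ} (hn : 0 < n) {x u : ℝ} (hu : 0 < u) (hux : u + u⁻¹ = x ^ 2 + 2) :
    ((VInt n).map (Int.castRingHom ℝ)).eval x *
      (u ^ ((n - 1) / 2) * (u - 1) * (if Even n then u + 1 else 1)) = u ^ n - 1 := by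
  have hinv : u * u⁻¹ = 1 := mul_inv_cancel₀ hu.ne'
  have hpow (m : ℕ) : u ^ m * u⁻¹ ^ m = 1 := by rw [← mul_pow, hinv, one_pow]
  have hS (m : ℕ) := Chebyshev.S_sub_one_eval_add_mul_sub hinv m
  simp only [VInt, Polynomial.map_comp, eval_comp, apply_ite (map (Int.castRingHom ℝ)),
    Polynomial.map_add, Chebyshev.map_S] at hS ⊢
  simp only [Polynomial.map_pow, Polynomial.map_X, Polynomial.map_ofNat, eval_add, eval_pow,
    eval_X, eval_ofNat, ← hux]
  obtain ⟨m, rfl | rfl⟩ := Nat.even_or_odd' n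
  · obtain ⟨m, rfl⟩ : ∃ m', m = m' + 1 := ⟨m - 1, by omega⟩
    rw [if_pos (even_two_mul _), if_pos (even_two_mul _),
      show 2 * (m + 1) / 2 = m + 1 by omega, show (2 * (m + 1) - 1) / 2 = m by omega]
    set s := eval (u + u⁻¹) (Chebyshev.S ℝ (↑(m + 1) - 1))
    linear_combination u ^ (m + 1) * hS (m + 1) + s * u ^ m * hinv - hpow (m + 1)
  · rw [if_neg (Nat.not_even_two_mul_add_one _), if_neg (Nat.not_even_two_mul_add_one _),
      show (2 * m + 1) / 2 = m by omega, show (2 * m + 1 - 1) / 2 = m by omega, eval_add]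
    have hS₁ : eval (u + u⁻¹) (Chebyshev.S ℝ m) * (u - u⁻¹) = u ^ (m + 1) - u⁻¹ ^ (m + 1) := by
      simpa using hS (m + 1)
    set s₁ := eval (u + u⁻¹) (Chebyshev.S ℝ m)
    set s₀ := eval (u + u⁻¹) (Chebyshev.S ℝ (↑m - 1))
    refine mul_right_cancel₀ (by positivity : u + 1 ≠ 0) ?_
    linear_combination u ^ (m + 1) * (hS₁ + hS m) + (s₁ + s₀) * u ^ m * hinv - hpow (m + 1) -
      u * hpow m

theorem map_VInt {n : ℕ} (hn : 0 < n) : (VInt n).map (Int.castRingHom ℝ) = V n := by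
  refine eq_of_infinite_eval_eq _ _ ((Set.finite_singleton 0).infinite_compl.mono fun x hx => ?_)
  obtain ⟨u, hu, hux⟩ := exists_pos_add_inv_eq_sq_add_two x
  have hu₁ : u ≠ 1 := by
    rintro rfl
    exact hx (pow_eq_zero_iff two_ne_zero |>.1 (by linarith))
  have hD : u ^ ((n - 1) / 2) * (u - 1) * (if Even n then u + 1 else 1) ≠ 0 := by
    refine mul_ne_zero (mul_ne_zero (pow_ne_zero _ hu.ne') (sub_ne_zero.2 hu₁)) ?_
    split_ifs <;> positivity
  exact mul_right_cancel₀ hD ((eval_map_VInt hn hu hux).trans (eval_V hn hu.ne' hux).symm)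

noncomputable def sinSqFactor (q : ℚ) : ℝ[X] :=
  if 2 * q < 1 then X ^ 2 + C (4 * sin (π * q) ^ 2) else 1

theorem sinSqFactor_natCast_div {k n : ℕ} (hn : n ≠ 0) :
    sinSqFactor (k / n) = if 2 * k < n then X ^ 2 + C (4 * sin (π * k / n) ^ 2) else 1 := by
  have hlt : 2 * ((k : ℚ) / n) < 1 ↔ 2 * k < n := by
    rw [mul_div_assoc', div_lt_one (by positivity)]
    norm_cast
  have hsin : π * (((k : ℚ) / n : ℚ) : ℝ) = π * k / n := by push_cast; ring
  simp only [sinSqFactor, hlt, hsin]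

theorem V_eq_prod_divisors_W {n : ℕ} (hn : n ≠ 0) : V n = ∏ d ∈ n.divisors, W d := by
  have hW (d : ℕ) (hd : d ≠ 0) :
      W d = ∏ j ∈ (Ico 1 d).filter (·.Coprime d), sinSqFactor (j / d) := by
    simp only [sinSqFactor_natCast_div hd, ← prod_filter, filter_filter, W]
    congr 1
    ext j
    simp [and_comm, Nat.coprime_iff_gcd_eq_one]
  calc V n = ∏ k ∈ Ico 1 n, sinSqFactor (k / n) := by
        simp only [sinSqFactor_natCast_div hn, ← prod_filter, V]
    _ = ∏ d ∈ n.divisors, ∏ j ∈ (Ico 1 d).filter (·.Coprime d), sinSqFactor (j / d) :=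
        Nat.prod_Ico_div_eq_prod_divisors_prod_coprime _ hn
    _ = ∏ d ∈ n.divisors, W d :=
        prod_congr rfl fun d hd => (hW d (Nat.pos_of_mem_divisors hd).ne').symm

theorem W_monic (n : ℕ) : (W n).Monic :=
  monic_prod_of_monic _ _ fun _ _ => monic_X_pow_add_C _ two_ne_zero

/-- For every `n ≥ 1`, the polynomial `W_n` has integer coefficients. -/
theorem W_int_coeffs (n : ℕ) (hn : 1 ≤ n) :
    ∃ p : Polynomial ℤ, p.map (Int.castRingHom ℝ) = W n := by
  induction n using Nat.strong_induction_on with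
  | _ n ih =>
  have hproper : ∏ d ∈ n.properDivisors, W d ∈ lifts (Int.castRingHom ℝ) :=
    prod_mem fun d hd => (mem_lifts _).2
      (ih d (Nat.mem_properDivisors.1 hd).2 (Nat.pos_of_mem_properDivisors hd))
  have hV : (∏ d ∈ n.properDivisors, W d) * W n ∈ lifts (Int.castRingHom ℝ) := by
    rw [mul_comm, ← prod_insert Nat.self_notMem_properDivisors,
      Nat.insert_self_properDivisors (by omega), ← V_eq_prod_divisors_W (by omega)]
    exact (mem_lifts _).2 ⟨VInt n, map_VInt hn⟩
  exact (mem_lifts _).1 <|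
    mem_lifts_of_monic_mul_mem_lifts hproper (monic_prod_of_monic _ _ fun d _ => W_monic d) hV
end

section
/- For an odd prime p and integer r ≥ 1, V_{p^r}(x) ≡ x^{p^r − 1} (mod p), and for p = 2 and r ≥ 1, V_{2^r}(x) ≡ x^{2^r − 2} (mod 2). -/
/-!
Over `ℂ` the roots of `X · V_n` are the `2⌊(n-1)/2⌋ + 1` distinct points
`2i sin(πj/n) = x + y`, `2|j| < n`, where `x = exp(iπj/n)` and `y = -x⁻¹`, so `xy = -1`.
The Dickson polynomials satisfy `D_n(x + y, xy) = xⁿ + yⁿ` and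
`(x - y) E_{n-1}(x + y, xy) = xⁿ - yⁿ`, and `x^{2n} = 1` makes these vanish for odd,
resp. even, `n`. Comparing degrees, `X · V_n` is the integer polynomial `D_n(X, -1)` for odd `n`
and `E_{n-1}(X, -1)` for even `n`. Reading the same identities in an algebraic closure of a
field of characteristic `p`, Frobenius gives `D_{p^r}(X, a) = X^{p^r}`, and in characteristic
`2`, where `x - y = x + y`, also `X · E_{2^r-1}(X, a) = X^{2^r}`. Dividing by `X` gives the
congruences.
-/

open Finset Polynomial Real

namespace Polynomial

section Dickson

variable {R : Type*} [CommRing R]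

theorem dickson_one_eval_add (x y : R) :
    ∀ n, (dickson 1 (x * y) n).eval (x + y) = x ^ n + y ^ n
  | 0 => by simp only [dickson_zero, eval_sub, eval_ofNat, eval_natCast]; norm_num
  | 1 => by simp
  | n + 2 => by
    simp only [dickson_add_two, eval_sub, eval_mul, eval_X, eval_C, dickson_one_eval_add x y n,
      dickson_one_eval_add x y (n + 1)]
    ring

theorem sub_mul_dickson_two_eval_add (x y : R) :
    ∀ n, (x - y) * (dickson 2 (x * y) n).eval (x + y) = x ^ (n + 1) - y ^ (n + 1)
  | 0 => by simp only [dickson_zero, eval_sub, eval_ofNat, eval_natCast]; norm_num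
  | 1 => by simp; ring
  | n + 2 => by
    have h₀ := sub_mul_dickson_two_eval_add x y n
    have h₁ := sub_mul_dickson_two_eval_add x y (n + 1)
    simp only [dickson_add_two, eval_sub, eval_mul, eval_X, eval_C]
    linear_combination (x + y) * h₁ - x * y * h₀

theorem natDegree_dickson_le (k : ℕ) (a : R) : ∀ n, (dickson k a n).natDegree ≤ n
  | 0 => by rw [dickson_zero]; exact (natDegree_sub_le _ _).trans (by simp)
  | 1 => by simpa using natDegree_X_le
  | n + 2 => by
    rw [dickson_add_two]
    refine (natDegree_sub_le _ _).trans (max_le ?_ ?_)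
    · exact (natDegree_mul_le_of_le natDegree_X_le (natDegree_dickson_le k a (n + 1))).trans
        (by omega)
    · exact (natDegree_C_mul_le _ _).trans ((natDegree_dickson_le k a n).trans (by omega))

theorem coeff_dickson_self (k : ℕ) (a : R) : ∀ n, n ≠ 0 → (dickson k a n).coeff n = 1
  | 1, _ => by simp
  | n + 2, _ => by
    rw [dickson_add_two, coeff_sub, coeff_X_mul, coeff_C_mul,
      coeff_eq_zero_of_natDegree_lt ((natDegree_dickson_le k a n).trans_lt (by omega)),
      coeff_dickson_self k a (n + 1) (by omega), mul_zero, sub_zero]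

variable {k n : ℕ} (a : R)

theorem dickson_monic (hn : n ≠ 0) : (dickson k a n).Monic :=
  monic_of_natDegree_le_of_coeff_eq_one n (natDegree_dickson_le k a n)
    (coeff_dickson_self k a n hn)

theorem natDegree_dickson [Nontrivial R] (hn : n ≠ 0) : (dickson k a n).natDegree = n :=
  natDegree_eq_of_le_of_coeff_ne_zero (natDegree_dickson_le k a n)
    (by rw [coeff_dickson_self k a n hn]; exact one_ne_zero)

end Dickson

theorem exists_map_eq_of_map_eq_X_mul {R S T : Type*} [CommRing R] [CommRing S] [CommRing T]
    {f : R →+* S} (hf : Function.Injective f) (g : R →+* T) {D : R[X]} {P : S[X]} {N : ℕ}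
    (hf_D : D.map f = X * P) (hg_D : D.map g = X ^ (N + 1)) :
    ∃ q : R[X], q.map f = P ∧ q.map g = X ^ N := by
  obtain ⟨q, rfl⟩ : X ∣ D :=
    X_dvd_iff.mpr (hf (by rw [← coeff_map, hf_D, coeff_X_mul_zero, map_zero]))
  rw [Polynomial.map_mul, map_X] at hf_D hg_D
  exact ⟨q, isRegular_X.left hf_D, isRegular_X.left (hg_D.trans (pow_succ' _ _))⟩

section CharP

variable {K : Type*} [Field K]

theorem eq_of_eval_add_eq_of_mul_eq (a : K) {P Q : K[X]}
    (h : ∀ x y : AlgebraicClosure K, x * y = algebraMap K _ a →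
      (P.map (algebraMap K _)).eval (x + y) = (Q.map (algebraMap K _)).eval (x + y)) :
    P = Q := by
  refine map_injective _ (algebraMap K (AlgebraicClosure K)).injective (funext fun t => ?_)
  obtain ⟨x, hx⟩ := IsAlgClosed.exists_root (X ^ 2 - C t * X + C (algebraMap K _ a))
    (ne_of_eq_of_ne (b := 2) (by compute_degree!) two_ne_zero)
  have hxy : x * (t - x) = algebraMap K _ a := by
    simp only [IsRoot, eval_add, eval_sub, eval_pow, eval_mul, eval_X, eval_C] at hx
    linear_combination -hx
  simpa using h x (t - x) hxy

theorem dickson_one_prime_pow_charP (p : ℕ) [Fact p.Prime] [CharP K p] (a : K) (r : ℕ) :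
    dickson 1 a (p ^ r) = X ^ p ^ r := by
  refine eq_of_eval_add_eq_of_mul_eq a fun x y hxy => ?_
  rw [map_dickson, ← hxy, dickson_one_eval_add, Polynomial.map_pow, map_X, eval_pow, eval_X,
    add_pow_char_pow]

theorem dickson_two_two_pow_sub_one_charP_two [CharP K 2] (a : K) (r : ℕ) :
    dickson 2 a (2 ^ r - 1) = X ^ (2 ^ r - 1) := by
  refine isRegular_X.left (show X * _ = X * _ from ?_)
  rw [← pow_succ', Nat.sub_add_cancel Nat.one_le_two_pow]
  refine eq_of_eval_add_eq_of_mul_eq a fun x y hxy => ?_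
  have h := sub_mul_dickson_two_eval_add x y (2 ^ r - 1)
  rw [Nat.sub_add_cancel Nat.one_le_two_pow, ← sub_pow_char_pow, CharTwo.sub_eq_add] at h
  rw [Polynomial.map_mul, map_dickson, ← hxy, eval_mul, map_X, eval_X, h, Polynomial.map_pow,
    map_X, eval_pow, eval_X]

end CharP

end Polynomial

section Trigonometric

open Complex (I)
open scoped Complex

theorem Complex.exp_mul_I_sub_inv (θ : ℂ) :
    cexp (θ * I) - (cexp (θ * I))⁻¹ = 2 * I * Complex.sin θ := by
  rw [← Complex.exp_neg, ← neg_mul, Complex.exp_mul_I, Complex.exp_mul_I, Complex.cos_neg,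
    Complex.sin_neg]
  ring

theorem Complex.exp_mul_I_add_inv (θ : ℂ) :
    cexp (θ * I) + (cexp (θ * I))⁻¹ = 2 * Complex.cos θ := by
  rw [← Complex.exp_neg, ← neg_mul, Complex.exp_mul_I, Complex.exp_mul_I, Complex.cos_neg,
    Complex.sin_neg]
  ring

theorem Real.pi_mul_div_mem_Ioo {n : ℕ} {j : ℤ} (hj : 2 * j.natAbs < n) :
    π * j / n ∈ Set.Ioo (-(π / 2)) (π / 2) := by
  have hn : (0 : ℝ) < n := by exact_mod_cast (show 0 < n by omega)
  have hj' : 2 * |(j : ℝ)| < n := by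
    rw [← Int.cast_abs, ← Int.natCast_natAbs]; exact_mod_cast hj
  obtain ⟨hlo, hhi⟩ := abs_lt.mp (show |(j : ℝ)| < n / 2 by linarith)
  rw [Set.mem_Ioo, lt_div_iff₀ hn, div_lt_iff₀ hn]
  constructor <;> nlinarith [pi_pos]

noncomputable def sinNode (n : ℕ) (j : ℤ) : ℂ := 2 * I * Complex.sin (π * j / n)

theorem sinNode_eq_ofReal (n : ℕ) (j : ℤ) :
    sinNode n j = 2 * I * (Real.sin (π * j / n) : ℂ) := by
  push_cast [sinNode]; rfl

theorem sinNode_eq_exp (n : ℕ) (j : ℤ) :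
    sinNode n j = cexp (π * j / n * I) + -(cexp (π * j / n * I))⁻¹ := by
  rw [← sub_eq_add_neg, Complex.exp_mul_I_sub_inv, sinNode]

theorem injOn_sinNode (n : ℕ) : Set.InjOn (sinNode n) {j | 2 * j.natAbs < n} := by
  intro j₁ h₁ j₂ h₂ h
  simp only [sinNode_eq_ofReal, mul_right_inj' (mul_ne_zero two_ne_zero Complex.I_ne_zero),
    Complex.ofReal_inj] at h
  have := Real.injOn_sin (Set.Ioo_subset_Icc_self (Real.pi_mul_div_mem_Ioo h₁))
    (Set.Ioo_subset_Icc_self (Real.pi_mul_div_mem_Ioo h₂)) h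
  have hn : (n : ℝ) ≠ 0 := by exact_mod_cast (show n ≠ 0 by simp at h₁; omega)
  field_simp [pi_ne_zero] at this
  exact_mod_cast this

theorem exp_pi_int_div_mul_I_pow_mul_self {n : ℕ} (hn : n ≠ 0) (j : ℤ) :
    cexp (π * j / n * I) ^ n * cexp (π * j / n * I) ^ n = 1 := by
  rw [← Complex.exp_nat_mul, ← Complex.exp_add, ← Complex.exp_int_mul_two_pi_mul_I j]
  congr 1
  field_simp
  ring

theorem dickson_one_isRoot_sinNode {n : ℕ} (hn : Odd n) (j : ℤ) :
    (dickson 1 (-1 : ℂ) n).IsRoot (sinNode n j) := by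
  set x := cexp (π * j / n * I)
  have hxy : x * -x⁻¹ = -1 := by rw [mul_neg, mul_inv_cancel₀ (Complex.exp_ne_zero _)]
  rw [IsRoot, sinNode_eq_exp, ← hxy, dickson_one_eval_add, hn.neg_pow, inv_pow,
    inv_eq_of_mul_eq_one_right (exp_pi_int_div_mul_I_pow_mul_self hn.pos.ne' j), add_neg_cancel]

theorem dickson_two_isRoot_sinNode {n : ℕ} (hn : Even n) {j : ℤ} (hj : 2 * j.natAbs < n) :
    (dickson 2 (-1 : ℂ) (n - 1)).IsRoot (sinNode n j) := by
  set x := cexp (π * j / n * I)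
  have hxy : x * -x⁻¹ = -1 := by rw [mul_neg, mul_inv_cancel₀ (Complex.exp_ne_zero _)]
  have hx : x - -x⁻¹ ≠ 0 := by
    rw [sub_neg_eq_add, Complex.exp_mul_I_add_inv]
    exact_mod_cast mul_ne_zero two_ne_zero
      (Real.cos_pos_of_mem_Ioo (Real.pi_mul_div_mem_Ioo hj)).ne'
  refine (mul_eq_zero.mp ?_).resolve_left hx
  rw [sinNode_eq_exp, ← hxy, sub_mul_dickson_two_eval_add, Nat.sub_add_cancel (by omega),
    hn.neg_pow, inv_pow,
    inv_eq_of_mul_eq_one_right (exp_pi_int_div_mul_I_pow_mul_self (by omega) j), sub_self]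

end Trigonometric

theorem V_monic (n : ℕ) : (V n).Monic :=
  monic_prod_of_monic _ _ fun _ _ => monic_X_pow_add_C _ two_ne_zero

theorem natDegree_V (n : ℕ) : (V n).natDegree = 2 * ((n - 1) / 2) := by
  have hfilter : (Ico 1 n).filter (fun k => 2 * k < n) = Icc 1 ((n - 1) / 2) := by
    ext k; simp only [mem_filter, mem_Ico, mem_Icc]; omega
  rw [V, natDegree_prod_of_monic _ _ fun _ _ => monic_X_pow_add_C _ two_ne_zero]
  simp only [natDegree_X_pow_add_C, sum_const, smul_eq_mul, hfilter, Nat.card_Icc]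
  omega

theorem map_V_isRoot_sinNode {n : ℕ} {j : ℤ} (hj₀ : j ≠ 0) (hj : 2 * j.natAbs < n) :
    ((V n).map Complex.ofRealHom).IsRoot (sinNode n j) := by
  rw [V, Polynomial.map_prod, IsRoot, eval_prod]
  refine prod_eq_zero (i := j.natAbs) (by simp only [mem_filter, mem_Ico]; omega) ?_
  have hsq : Real.sin (π * j.natAbs / n) ^ 2 = Real.sin (π * j / n) ^ 2 := by
    rw [Nat.cast_natAbs, Int.cast_abs]
    rcases abs_choice (j : ℝ) with h | h <;> rw [h]
    rw [mul_neg, neg_div, Real.sin_neg, neg_sq]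
  simp only [Polynomial.map_add, Polynomial.map_pow, map_X, map_C, eval_add, eval_pow, eval_X,
    eval_C, Complex.ofRealHom_eq_coe, sinNode_eq_ofReal, hsq, mul_pow, Complex.I_sq]
  push_cast
  ring

theorem X_mul_map_V_eq_of_isRoot {n : ℕ} (hn : n ≠ 0) {Q : ℂ[X]} (hQ : Q.Monic)
    (hQ_deg : Q.natDegree = 2 * ((n - 1) / 2) + 1)
    (hQ_root : ∀ j : ℤ, 2 * j.natAbs < n → Q.IsRoot (sinNode n j)) :
    X * (V n).map Complex.ofRealHom = Q := by
  set b := (n - 1) / 2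
  have hnodes : ∀ j ∈ Icc (-(b : ℤ)) b, 2 * j.natAbs < n := by
    intro j hj; rw [mem_Icc] at hj; omega
  have hP : (X * (V n).map Complex.ofRealHom).Monic := monic_X.mul ((V_monic n).map _)
  have hP_deg : (X * (V n).map Complex.ofRealHom).natDegree = 2 * b + 1 := by
    rw [natDegree_mul X_ne_zero ((V_monic n).map _).ne_zero, natDegree_X, natDegree_map,
      natDegree_V]
    ring
  refine eq_of_degree_sub_lt_of_eval_finset_eq ((Icc (-(b : ℤ)) b).image (sinNode n)) ?_ ?_
  · have hcard : #((Icc (-(b : ℤ)) b).image (sinNode n)) = 2 * b + 1 := by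
      rw [card_image_of_injOn ((injOn_sinNode n).mono hnodes), Int.card_Icc]
      omega
    rw [hcard, ← hP_deg, ← degree_eq_natDegree hP.ne_zero]
    refine degree_sub_lt_left ?_ hP.ne_zero (by rw [hP.leadingCoeff, hQ.leadingCoeff])
    rw [degree_eq_natDegree hP.ne_zero, degree_eq_natDegree hQ.ne_zero, hP_deg, hQ_deg]
  · simp only [mem_image]
    rintro _ ⟨j, hj, rfl⟩
    rw [(hQ_root j (hnodes j hj)).eq_zero, eval_mul, eval_X]
    rcases eq_or_ne j 0 with rfl | hj₀
    · simp [sinNode]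
    · rw [(map_V_isRoot_sinNode hj₀ (hnodes j hj)).eq_zero, mul_zero]

theorem X_mul_V_eq_map_dickson_one {n : ℕ} (hn : Odd n) :
    X * V n = (dickson 1 (-1 : ℤ) n).map (Int.castRingHom ℝ) := by
  refine map_injective Complex.ofRealHom Complex.ofReal_injective ?_
  rw [Polynomial.map_mul, map_X, Polynomial.map_map, map_dickson, map_neg, map_one]
  obtain ⟨m, rfl⟩ := hn
  exact X_mul_map_V_eq_of_isRoot (by omega) (dickson_monic _ (by omega))
    (by rw [natDegree_dickson _ (by omega)]; omega)
    fun j _ => dickson_one_isRoot_sinNode ⟨m, rfl⟩ j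

theorem X_mul_V_eq_map_dickson_two {n : ℕ} (hn : Even n) (hn₀ : n ≠ 0) :
    X * V n = (dickson 2 (-1 : ℤ) (n - 1)).map (Int.castRingHom ℝ) := by
  refine map_injective Complex.ofRealHom Complex.ofReal_injective ?_
  rw [Polynomial.map_mul, map_X, Polynomial.map_map, map_dickson, map_neg, map_one]
  obtain ⟨m, rfl⟩ := hn
  exact X_mul_map_V_eq_of_isRoot hn₀ (dickson_monic _ (by omega))
    (by rw [natDegree_dickson _ (by omega)]; omega)
    fun j hj => dickson_two_isRoot_sinNode ⟨m, rfl⟩ hj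

/-- For an odd prime `p` and `r ≥ 1`, `V_{p^r}(x) ≡ x^{p^r − 1} (mod p)`; and
`V_{2^r}(x) ≡ x^{2^r − 2} (mod 2)`.  (The congruence is stated for the integer
polynomial whose real image is `V_{p^r}`.) -/
theorem V_prime_pow_congr (p r : ℕ) (hp : p.Prime) (hr : 1 ≤ r) :
    (Odd p → ∃ q : Polynomial ℤ, q.map (Int.castRingHom ℝ) = V (p ^ r) ∧
      q.map (Int.castRingHom (ZMod p)) = Polynomial.X ^ (p ^ r - 1)) ∧
    (p = 2 → ∃ q : Polynomial ℤ, q.map (Int.castRingHom ℝ) = V (2 ^ r) ∧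
      q.map (Int.castRingHom (ZMod 2)) = Polynomial.X ^ (2 ^ r - 2)) := by
  have hℝ : Function.Injective (Int.castRingHom ℝ) := (Int.castRingHom ℝ).injective_int
  refine ⟨fun hp_odd => ?_, fun hp_two => ?_⟩
  · have := Fact.mk hp
    refine exists_map_eq_of_map_eq_X_mul hℝ _ (X_mul_V_eq_map_dickson_one hp_odd.pow).symm ?_
    rw [map_dickson, map_neg, map_one, dickson_one_prime_pow_charP,
      Nat.sub_add_cancel (Nat.one_le_pow _ _ hp.pos)]
  · subst hp_two
    have h₂ : 2 ≤ 2 ^ r := Nat.le_self_pow (by omega) 2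
    have h_even : Even (2 ^ r) := Nat.even_pow.mpr ⟨even_two, by omega⟩
    refine exists_map_eq_of_map_eq_X_mul hℝ _
      (X_mul_V_eq_map_dickson_two h_even (by omega)).symm ?_
    rw [map_dickson, map_neg, map_one, dickson_two_two_pow_sub_one_charP_two,
      show 2 ^ r - 2 + 1 = 2 ^ r - 1 by omega]
end
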